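/- For every point z = (W, b₁, b₂, V) in the level set Ω_θ and every index j ∈ {1,…,N₀}, the j-th entry of b₂ satisfies (b₂)_j ≤ θ√(N₁N₀θ)/(λ₁√λ₂) + √(Nθ) + ‖X‖₁. Consequently, combining with the bound (b₁)_j ≤ θ/λ₁ + √(N₁N₀θ/λ₂)‖X‖₁, every entry of (b₁)₊ and of (b₂)₊ is at most α. -/

import Mathlib

open scoped BigOperators

noncomputable section

/-- A point `z = (W, b₁, b₂, V)`. -/
abbrev Pt (N N₀ N₁ : ℕ) : Type :=
  Matrix (Fin N₁) (Fin N₀) ℝ × (Fin N₁ → ℝ) × (Fin N₀ → ℝ) × Matrix (Fin N₁) (Fin N) ℝ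

/-- ReLU: positive part. -/
def relu (y : ℝ) : ℝ := max y 0

variable {N N₀ N₁ : ℕ}

/-- squared Euclidean norm of a point `z = (W,b₁,b₂,V)`. -/
def sqnormPt (z : Pt N N₀ N₁) : ℝ :=
  (∑ i, ∑ j, (z.1 i j) ^ 2) + (∑ i, (z.2.1 i) ^ 2) + (∑ j, (z.2.2.1 j) ^ 2)
    + (∑ i, ∑ n, (z.2.2.2 i n) ^ 2)

/-- Euclidean norm of a point. -/
def normPt (z : Pt N N₀ N₁) : ℝ := Real.sqrt (sqnormPt z)

/-- Euclidean distance between points. -/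
def distPt (z z' : Pt N N₀ N₁) : ℝ := normPt (z - z')

/-- `(W xₙ + b₁)ᵢ`. -/
def preact (X : Matrix (Fin N₀) (Fin N) ℝ) (z : Pt N N₀ N₁) (i : Fin N₁) (n : Fin N) : ℝ :=
  (∑ j, z.1 i j * X j n) + z.2.1 i

/-- `(Wᵀ vₙ + b₂)ⱼ`. -/
def outPre (z : Pt N N₀ N₁) (j : Fin N₀) (n : Fin N) : ℝ :=
  (∑ i, z.1 i j * z.2.2.2 i n) + z.2.2.1 j

/-- fidelity term `F(z)`. -/
def Fv (X : Matrix (Fin N₀) (Fin N) ℝ) (z : Pt N N₀ N₁) : ℝ :=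
  (1 / (N : ℝ)) * ∑ n, ∑ j, (relu (outPre z j n) - X j n) ^ 2

/-- regularization term `R(z)`. -/
def Rv (lam₁ lam₂ : ℝ) (z : Pt N N₀ N₁) : ℝ :=
  lam₁ * (∑ n, ∑ i, z.2.2.2 i n) + lam₂ * ∑ i, ∑ j, (z.1 i j) ^ 2

/-- penalty term `P(z)`. -/
def Pv (β : ℝ) (X : Matrix (Fin N₀) (Fin N) ℝ) (z : Pt N N₀ N₁) : ℝ :=
  β * ∑ n, ∑ i, (z.2.2.2 i n - relu (preact X z i n))

/-- objective `O(z) = F(z) + R(z) + P(z)`. -/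
def Ov (lam₁ lam₂ β : ℝ) (X : Matrix (Fin N₀) (Fin N) ℝ) (z : Pt N N₀ N₁) : ℝ :=
  Fv X z + Rv lam₁ lam₂ z + Pv β X z

/-- `Ω₁ = {z : vₙ = (Wxₙ + b₁)₊}`. -/
def Omega1 (X : Matrix (Fin N₀) (Fin N) ℝ) : Set (Pt N N₀ N₁) :=
  {z | ∀ i n, z.2.2.2 i n = relu (preact X z i n)}

/-- `Ω₂ = {z : vₙ ≥ (Wxₙ + b₁)₊}`. -/
def Omega2 (X : Matrix (Fin N₀) (Fin N) ℝ) : Set (Pt N N₀ N₁) :=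
  {z | ∀ i n, relu (preact X z i n) ≤ z.2.2.2 i n}

/-- level set `Ω_θ = {z ∈ Ω₂ : O(z) ≤ θ}` (also used for `Ω_δ`). -/
def OmegaLev (lam₁ lam₂ β θ : ℝ) (X : Matrix (Fin N₀) (Fin N) ℝ) : Set (Pt N N₀ N₁) :=
  {z | z ∈ Omega2 X ∧ Ov lam₁ lam₂ β X z ≤ θ}

/-- `‖X‖₁`: maximum absolute column sum. -/
def Xcol1 (X : Matrix (Fin N₀) (Fin N) ℝ) : ℝ := ⨆ n, ∑ j, |X j n|

/-- the constant `α`. -/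
def alphaC (N N₀ N₁ : ℕ) (lam₁ lam₂ θ : ℝ) (X : Matrix (Fin N₀) (Fin N) ℝ) : ℝ :=
  max (θ / lam₁ + Real.sqrt ((N₁ : ℝ) * (N₀ : ℝ) * θ / lam₂) * Xcol1 X)
      (θ * Real.sqrt ((N₁ : ℝ) * (N₀ : ℝ) * θ) / (lam₁ * Real.sqrt lam₂)
        + Real.sqrt ((N : ℝ) * θ) + Xcol1 X)

/-- `Ω₃ = {z : ‖b₁‖_∞ ≤ α, ‖b₂‖_∞ ≤ α}`. -/
def Omega3 (lam₁ lam₂ θ : ℝ) (X : Matrix (Fin N₀) (Fin N) ℝ) : Set (Pt N N₀ N₁) :=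
  {z | (∀ i, |z.2.1 i| ≤ alphaC N N₀ N₁ lam₁ lam₂ θ X) ∧
       (∀ j, |z.2.2.1 j| ≤ alphaC N N₀ N₁ lam₁ lam₂ θ X)}

/-- `Z = Ω₂ ∩ Ω₃`. -/
def Zset (lam₁ lam₂ θ : ℝ) (X : Matrix (Fin N₀) (Fin N) ℝ) : Set (Pt N N₀ N₁) :=
  Omega2 X ∩ Omega3 lam₁ lam₂ θ X

/-- tangent cone of `C` at `zb`. -/
def TangentCone (C : Set (Pt N N₀ N₁)) (zb : Pt N N₀ N₁) : Set (Pt N N₀ N₁) :=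
  {d | ∃ zs : ℕ → Pt N N₀ N₁, ∃ ts : ℕ → ℝ,
      (∀ k, zs k ∈ C) ∧ (∀ k, 0 < ts k) ∧
      Filter.Tendsto ts Filter.atTop (nhds 0) ∧
      Filter.Tendsto (fun k => distPt (zs k) zb) Filter.atTop (nhds 0) ∧
      Filter.Tendsto (fun k => normPt ((ts k)⁻¹ • (zs k - zb) - d)) Filter.atTop (nhds 0)}

/-- `zb` is a d-stationary point of `f` over `C`:
`liminf_{t↓0} (f(zb + t d) - f(zb))/t ≥ 0` for every tangent direction `d`. -/
def DStationary (f : Pt N N₀ N₁ → ℝ) (C : Set (Pt N N₀ N₁)) (zb : Pt N N₀ N₁) : Prop :=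
  zb ∈ C ∧ ∀ d ∈ TangentCone C zb, ∀ ε : ℝ, 0 < ε → ∃ δ : ℝ, 0 < δ ∧
    ∀ t : ℝ, 0 < t → t < δ → -ε < (f (zb + t • d) - f zb) / t

/-- smoothing function `s_μ` of the ReLU. -/
def smoothRelu (μ y : ℝ) : ℝ :=
  if y < 0 then 0 else if y ≤ μ then y ^ 2 / (2 * μ) else y - μ / 2

/-- smoothed fidelity term `F̃(z, μ)`. -/
def Ftil (X : Matrix (Fin N₀) (Fin N) ℝ) (z : Pt N N₀ N₁) (μ : ℝ) : ℝ :=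
  (1 / (N : ℝ)) * (∑ n, ∑ j, (relu (outPre z j n)) ^ 2)
    + (1 / (N : ℝ)) * (∑ j, ∑ n, (X j n) ^ 2)
    - (2 / (N : ℝ)) * ∑ n, ∑ j, X j n * smoothRelu μ (outPre z j n)

/-- smoothed penalty term `P̃(z, μ)`. -/
def Ptil (β : ℝ) (X : Matrix (Fin N₀) (Fin N) ℝ) (z : Pt N N₀ N₁) (μ : ℝ) : ℝ :=
  β * ∑ n, ∑ i, (z.2.2.2 i n - smoothRelu μ (preact X z i n))

/-- smoothed objective `Õ(z, μ)`. -/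
def Otil (lam₁ lam₂ β : ℝ) (X : Matrix (Fin N₀) (Fin N) ℝ) (z : Pt N N₀ N₁) (μ : ℝ) : ℝ :=
  Ftil X z μ + Ptil β X z μ + Rv lam₁ lam₂ z

/-!
On the level set every term of the objective is nonnegative, so each is at most `θ`: this bounds
`‖W‖_F² ≤ θ/λ₂` (hence every entry of `W` by `√(N₁N₀θ/λ₂)`), the column sums of `V ≥ 0` by
`θ/λ₁`, and `((Wᵀvₙ + b₂)₊ - xₙ)²` by `Nθ`. Reading off one sample `n`,
`b₁ = (Wxₙ + b₁) - Wxₙ ≤ vₙ - Wxₙ` and `b₂ = (Wᵀvₙ + b₂) - Wᵀvₙ ≤ xₙ + √(Nθ) - Wᵀvₙ`,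
and the cross terms are controlled by the entrywise bound on `W` against `‖xₙ‖₁ ≤ ‖X‖₁` and
`‖vₙ‖₁ ≤ θ/λ₁`.
-/

lemma le_sum_sum_of_nonneg {ι κ : Type*} [Fintype ι] [Fintype κ] {f : ι → κ → ℝ}
    (hf : ∀ i k, 0 ≤ f i k) (i : ι) (k : κ) : f i k ≤ ∑ i, ∑ k, f i k :=
  (Finset.single_le_sum (fun k _ => hf i k) (Finset.mem_univ k)).trans
    (Finset.single_le_sum (fun i _ => Finset.sum_nonneg fun k _ => hf i k) (Finset.mem_univ i))

lemma abs_sum_mul_le_mul_sum_abs {ι : Type*} [Fintype ι] {a b : ι → ℝ} {c : ℝ}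
    (ha : ∀ i, |a i| ≤ c) : |∑ i, a i * b i| ≤ c * ∑ i, |b i| :=
  calc |∑ i, a i * b i| ≤ ∑ i, |a i| * |b i| := by
        simpa only [abs_mul] using Finset.abs_sum_le_sum_abs (fun i => a i * b i) Finset.univ
    _ ≤ ∑ i, c * |b i| :=
        Finset.sum_le_sum fun i _ => mul_le_mul_of_nonneg_right (ha i) (abs_nonneg _)
    _ = c * ∑ i, |b i| := (Finset.mul_sum ..).symm

lemma sum_abs_le_xcol1 (X : Matrix (Fin N₀) (Fin N) ℝ) (n : Fin N) :
    ∑ j, |X j n| ≤ Xcol1 X :=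
  le_ciSup (f := fun n => ∑ j, |X j n|) (Finite.bddAbove_range _) n

lemma abs_le_xcol1 (X : Matrix (Fin N₀) (Fin N) ℝ) (j : Fin N₀) (n : Fin N) :
    |X j n| ≤ Xcol1 X :=
  (Finset.single_le_sum (fun j _ => abs_nonneg (X j n)) (Finset.mem_univ j)).trans
    (sum_abs_le_xcol1 X n)

section LevelSet

variable {lam₁ lam₂ β θ : ℝ} {X : Matrix (Fin N₀) (Fin N) ℝ} {z : Pt N N₀ N₁}

lemma v_nonneg_of_mem_omega2 (hz : z ∈ Omega2 X) (i : Fin N₁) (n : Fin N) :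
    0 ≤ z.2.2.2 i n :=
  (le_max_right _ 0).trans (hz i n)

lemma fv_nonneg : 0 ≤ Fv X z := by
  unfold Fv
  positivity

lemma pv_nonneg_of_mem_omega2 (hβ : 0 ≤ β) (hz : z ∈ Omega2 X) : 0 ≤ Pv β X z :=
  mul_nonneg hβ <| Finset.sum_nonneg fun n _ => Finset.sum_nonneg fun i _ =>
    sub_nonneg.2 (hz i n)

lemma sum_sum_v_nonneg_of_mem_omega2 (hz : z ∈ Omega2 X) : 0 ≤ ∑ n, ∑ i, z.2.2.2 i n :=
  Finset.sum_nonneg fun n _ => Finset.sum_nonneg fun i _ => v_nonneg_of_mem_omega2 hz i n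

lemma fv_add_rv_le_of_mem_omegaLev (hβ : 0 ≤ β) (hz : z ∈ OmegaLev lam₁ lam₂ β θ X) :
    Fv X z + lam₁ * (∑ n, ∑ i, z.2.2.2 i n) + lam₂ * ∑ i, ∑ j, (z.1 i j) ^ 2 ≤ θ := by
  have hO : Fv X z + Rv lam₁ lam₂ z + Pv β X z ≤ θ := hz.2
  have hP := pv_nonneg_of_mem_omega2 hβ hz.1
  unfold Rv at hO
  linarith

lemma fv_le_of_mem_omegaLev (hlam₁ : 0 ≤ lam₁) (hlam₂ : 0 ≤ lam₂) (hβ : 0 ≤ β)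
    (hz : z ∈ OmegaLev lam₁ lam₂ β θ X) : Fv X z ≤ θ := by
  have := fv_add_rv_le_of_mem_omegaLev hβ hz
  have := mul_nonneg hlam₁ (sum_sum_v_nonneg_of_mem_omega2 hz.1)
  have := mul_nonneg hlam₂ (by positivity : 0 ≤ ∑ i, ∑ j, (z.1 i j) ^ 2)
  linarith

lemma sum_sum_v_le_of_mem_omegaLev (hlam₁ : 0 < lam₁) (hlam₂ : 0 ≤ lam₂) (hβ : 0 ≤ β)
    (hz : z ∈ OmegaLev lam₁ lam₂ β θ X) : ∑ n, ∑ i, z.2.2.2 i n ≤ θ / lam₁ := by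
  rw [le_div_iff₀' hlam₁]
  have := fv_add_rv_le_of_mem_omegaLev hβ hz
  have := fv_nonneg (X := X) (z := z)
  have := mul_nonneg hlam₂ (by positivity : 0 ≤ ∑ i, ∑ j, (z.1 i j) ^ 2)
  linarith

lemma sum_sum_sq_w_le_of_mem_omegaLev (hlam₁ : 0 ≤ lam₁) (hlam₂ : 0 < lam₂) (hβ : 0 ≤ β)
    (hz : z ∈ OmegaLev lam₁ lam₂ β θ X) : ∑ i, ∑ j, (z.1 i j) ^ 2 ≤ θ / lam₂ := by
  rw [le_div_iff₀' hlam₂]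
  have := fv_add_rv_le_of_mem_omegaLev hβ hz
  have := fv_nonneg (X := X) (z := z)
  have := mul_nonneg hlam₁ (sum_sum_v_nonneg_of_mem_omega2 hz.1)
  linarith

lemma nonneg_of_mem_omegaLev (hlam₁ : 0 ≤ lam₁) (hlam₂ : 0 ≤ lam₂) (hβ : 0 ≤ β)
    (hz : z ∈ OmegaLev lam₁ lam₂ β θ X) : 0 ≤ θ :=
  fv_nonneg.trans (fv_le_of_mem_omegaLev hlam₁ hlam₂ hβ hz)

lemma sum_v_le_of_mem_omegaLev (hlam₁ : 0 < lam₁) (hlam₂ : 0 ≤ lam₂) (hβ : 0 ≤ β)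
    (hz : z ∈ OmegaLev lam₁ lam₂ β θ X) (n : Fin N) : ∑ i, z.2.2.2 i n ≤ θ / lam₁ :=
  (Finset.single_le_sum (f := fun n => ∑ i, z.2.2.2 i n)
    (fun n _ => Finset.sum_nonneg fun i _ => v_nonneg_of_mem_omega2 hz.1 i n)
    (Finset.mem_univ n)).trans (sum_sum_v_le_of_mem_omegaLev hlam₁ hlam₂ hβ hz)

lemma abs_w_le_of_mem_omegaLev (hlam₁ : 0 ≤ lam₁) (hlam₂ : 0 < lam₂) (hβ : 0 ≤ β)
    (hz : z ∈ OmegaLev lam₁ lam₂ β θ X) (i : Fin N₁) (j : Fin N₀) :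
    |z.1 i j| ≤ Real.sqrt ((N₁ : ℝ) * (N₀ : ℝ) * θ / lam₂) := by
  have hθ := nonneg_of_mem_omegaLev hlam₁ hlam₂.le hβ hz
  have hN₁ : (1 : ℝ) ≤ N₁ := by exact_mod_cast i.pos
  have hN₀ : (1 : ℝ) ≤ N₀ := by exact_mod_cast j.pos
  refine Real.abs_le_sqrt ?_
  calc z.1 i j ^ 2 ≤ ∑ i, ∑ j, (z.1 i j) ^ 2 :=
        le_sum_sum_of_nonneg (f := fun i j => z.1 i j ^ 2) (fun _ _ => sq_nonneg _) i j
    _ ≤ θ / lam₂ := sum_sum_sq_w_le_of_mem_omegaLev hlam₁ hlam₂ hβ hz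
    _ ≤ (N₁ : ℝ) * (N₀ : ℝ) * θ / lam₂ := by
        gcongr
        exact le_mul_of_one_le_left hθ (one_le_mul_of_one_le_of_one_le hN₁ hN₀)

lemma relu_outPre_le_of_mem_omegaLev (hlam₁ : 0 ≤ lam₁) (hlam₂ : 0 ≤ lam₂) (hβ : 0 ≤ β)
    (hz : z ∈ OmegaLev lam₁ lam₂ β θ X) (j : Fin N₀) (n : Fin N) :
    relu (outPre z j n) ≤ X j n + Real.sqrt ((N : ℝ) * θ) := by
  have hN : (0 : ℝ) < N := by exact_mod_cast n.pos
  have hsq : (relu (outPre z j n) - X j n) ^ 2 ≤ (N : ℝ) * θ :=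
    calc (relu (outPre z j n) - X j n) ^ 2
        ≤ ∑ n, ∑ j, (relu (outPre z j n) - X j n) ^ 2 :=
          le_sum_sum_of_nonneg (f := fun n j => (relu (outPre z j n) - X j n) ^ 2)
            (fun _ _ => sq_nonneg _) n j
      _ = (N : ℝ) * Fv X z := by unfold Fv; rw [← mul_assoc, mul_one_div_cancel hN.ne', one_mul]
      _ ≤ (N : ℝ) * θ := by gcongr; exact fv_le_of_mem_omegaLev hlam₁ hlam₂ hβ hz
  linarith [le_abs_self (relu (outPre z j n) - X j n), Real.abs_le_sqrt hsq]

lemma b₁_le_of_mem_omegaLev (hlam₁ : 0 < lam₁) (hlam₂ : 0 < lam₂) (hβ : 0 ≤ β)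
    (hz : z ∈ OmegaLev lam₁ lam₂ β θ X) (n : Fin N) (i : Fin N₁) :
    z.2.1 i ≤ θ / lam₁ + Real.sqrt ((N₁ : ℝ) * (N₀ : ℝ) * θ / lam₂) * Xcol1 X := by
  have hpre : preact X z i n ≤ θ / lam₁ :=
    calc preact X z i n ≤ relu (preact X z i n) := le_max_left _ 0
      _ ≤ z.2.2.2 i n := hz.1 i n
      _ ≤ ∑ i, z.2.2.2 i n :=
          Finset.single_le_sum (fun i _ => v_nonneg_of_mem_omega2 hz.1 i n) (Finset.mem_univ i)
      _ ≤ θ / lam₁ := sum_v_le_of_mem_omegaLev hlam₁ hlam₂.le hβ hz n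
  have hWx : |∑ j, z.1 i j * X j n| ≤ Real.sqrt ((N₁ : ℝ) * (N₀ : ℝ) * θ / lam₂) * Xcol1 X :=
    (abs_sum_mul_le_mul_sum_abs (abs_w_le_of_mem_omegaLev hlam₁.le hlam₂ hβ hz i)).trans
      (mul_le_mul_of_nonneg_left (sum_abs_le_xcol1 X n) (Real.sqrt_nonneg _))
  have hb : z.2.1 i = preact X z i n - ∑ j, z.1 i j * X j n := by unfold preact; ring
  linarith [neg_abs_le (∑ j, z.1 i j * X j n)]

lemma b₂_le_of_mem_omegaLev (hlam₁ : 0 < lam₁) (hlam₂ : 0 < lam₂) (hβ : 0 ≤ β)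
    (hz : z ∈ OmegaLev lam₁ lam₂ β θ X) (n : Fin N) (j : Fin N₀) :
    z.2.2.1 j ≤ θ * Real.sqrt ((N₁ : ℝ) * (N₀ : ℝ) * θ) / (lam₁ * Real.sqrt lam₂)
      + Real.sqrt ((N : ℝ) * θ) + Xcol1 X := by
  have hWv : |∑ i, z.1 i j * z.2.2.2 i n| ≤
      θ * Real.sqrt ((N₁ : ℝ) * (N₀ : ℝ) * θ) / (lam₁ * Real.sqrt lam₂) :=
    calc |∑ i, z.1 i j * z.2.2.2 i n|
        ≤ Real.sqrt ((N₁ : ℝ) * (N₀ : ℝ) * θ / lam₂) * ∑ i, |z.2.2.2 i n| :=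
          abs_sum_mul_le_mul_sum_abs fun i => abs_w_le_of_mem_omegaLev hlam₁.le hlam₂ hβ hz i j
      _ ≤ Real.sqrt ((N₁ : ℝ) * (N₀ : ℝ) * θ / lam₂) * (θ / lam₁) := by
          gcongr
          simpa only [abs_of_nonneg (v_nonneg_of_mem_omega2 hz.1 _ n)]
            using sum_v_le_of_mem_omegaLev hlam₁ hlam₂.le hβ hz n
      _ = θ * Real.sqrt ((N₁ : ℝ) * (N₀ : ℝ) * θ) / (lam₁ * Real.sqrt lam₂) := by
          rw [Real.sqrt_div' _ hlam₂.le]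
          ring
  have hout : outPre z j n ≤ X j n + Real.sqrt ((N : ℝ) * θ) :=
    (le_max_left _ 0).trans (relu_outPre_le_of_mem_omegaLev hlam₁.le hlam₂.le hβ hz j n)
  have hb : z.2.2.1 j = outPre z j n - ∑ i, z.1 i j * z.2.2.2 i n := by unfold outPre; ring
  linarith [neg_abs_le (∑ i, z.1 i j * z.2.2.2 i n), abs_le_xcol1 X j n,
    le_abs_self (X j n)]

end LevelSet

theorem stmt2_general (N N₀ N₁ : ℕ) (hN : 0 < N)
    (lam₁ lam₂ β θ : ℝ) (hlam₁ : 0 < lam₁) (hlam₂ : 0 < lam₂) (hbeta : 0 < β)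
    (X : Matrix (Fin N₀) (Fin N) ℝ)
    (z : Pt N N₀ N₁) (hz : z ∈ OmegaLev lam₁ lam₂ β θ X) :
    (∀ j : Fin N₀, z.2.2.1 j ≤
        θ * Real.sqrt ((N₁ : ℝ) * (N₀ : ℝ) * θ) / (lam₁ * Real.sqrt lam₂)
          + Real.sqrt ((N : ℝ) * θ) + Xcol1 X) ∧
    (∀ i : Fin N₁, max (z.2.1 i) 0 ≤ alphaC N N₀ N₁ lam₁ lam₂ θ X) ∧
    (∀ j : Fin N₀, max (z.2.2.1 j) 0 ≤ alphaC N N₀ N₁ lam₁ lam₂ θ X) := by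
  let n : Fin N := ⟨0, hN⟩
  have hθ := nonneg_of_mem_omegaLev hlam₁.le hlam₂.le hbeta.le hz
  have hX : 0 ≤ Xcol1 X :=
    (Finset.sum_nonneg fun j _ => abs_nonneg (X j n)).trans (sum_abs_le_xcol1 X n)
  have hb₂ := b₂_le_of_mem_omegaLev hlam₁ hlam₂ hbeta.le hz n
  refine ⟨hb₂, fun i => ?_, fun j => ?_⟩
  · refine max_le ((b₁_le_of_mem_omegaLev hlam₁ hlam₂ hbeta.le hz n i).trans (le_max_left _ _))
      (le_trans ?_ (le_max_left _ _))
    positivity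
  · refine max_le ((hb₂ j).trans (le_max_right _ _)) (le_trans ?_ (le_max_right _ _))
    positivity

theorem stmt2 (N N₀ N₁ : ℕ) (hN : 0 < N) (hN₀ : 0 < N₀) (hN₁ : 0 < N₁)
    (lam₁ lam₂ β θ : ℝ) (hlam₁ : 0 < lam₁) (hlam₂ : 0 < lam₂) (hbeta : 0 < β)
    (X : Matrix (Fin N₀) (Fin N) ℝ)
    (hθ : (1 / (N : ℝ)) * ∑ j, ∑ n, (X j n) ^ 2 < θ)
    (z : Pt N N₀ N₁) (hz : z ∈ OmegaLev lam₁ lam₂ β θ X) :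
    (∀ j : Fin N₀, z.2.2.1 j ≤
        θ * Real.sqrt ((N₁ : ℝ) * (N₀ : ℝ) * θ) / (lam₁ * Real.sqrt lam₂)
          + Real.sqrt ((N : ℝ) * θ) + Xcol1 X) ∧
    (∀ i : Fin N₁, max (z.2.1 i) 0 ≤ alphaC N N₀ N₁ lam₁ lam₂ θ X) ∧
    (∀ j : Fin N₀, max (z.2.2.1 j) 0 ≤ alphaC N N₀ N₁ lam₁ lam₂ θ X) :=
  stmt2_general N N₀ N₁ hN lam₁ lam₂ β θ hlam₁ hlam₂ hbeta X z hz
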